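/- Let H ∈ (0,1/2) and let L : (0,1] → (0,∞) be such that, writing γ_t = t^{2H} L(t)² and ν_t = t^{H−1/2} L(t), one has γ_t → 0, ν_t → ∞, γ_t log ν_t → 0 and γ_t log t → 0 as t → 0⁺. Let Φ denote the standard Gaussian cumulative distribution function and, for k ∈ ℝ and v > 0, let C_BS(k,v) = Φ(−k/v + v/2) − e^k Φ(−k/v − v/2) be the Black–Scholes call price with unit spot and total volatility v. Fix x > 0 and Λ_x ∈ (0,∞), let t₀ ∈ (0,1], and let c : (0,t₀) → (0,1) satisfy lim_{t→0⁺} γ_t log c(t) = −Λ_x. If σ̂ : (0,t₀) → (0,∞) satisfies C_BS(x/ν_t, σ̂(t)√t) = c(t) for every t ∈ (0,t₀), then σ̂(t) → x/√(2Λ_x) as t → 0⁺. -/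

import Mathlib

open Real Filter Set MeasureTheory Topology

/-- The standard Gaussian cumulative distribution function. -/
noncomputable def stdNormalCDF (x : ℝ) : ℝ :=
  ∫ y in Set.Iic x, Real.exp (-(y ^ 2) / 2) / Real.sqrt (2 * Real.pi)

/-- Black–Scholes call price with unit spot, log-moneyness `k` and total volatility `v`. -/
noncomputable def CBS (k v : ℝ) : ℝ :=
  stdNormalCDF (-(k / v) + v / 2) - Real.exp k * stdNormalCDF (-(k / v) - v / 2)

/-!
With `k = x / ν_t` and `γ_t = ν_t² t`, the Black–Scholes arguments at total volatility of order `√t`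
satisfy `γ_t (k / (a√t) + b√t / 2)² = (x / a + b ν_t t / 2)² → (x / a)²`, as `ν_t t = √γ_t √t → 0`.
Two bounds on the call price turn this into bounds on `γ_t log CBS`:
`CBS(k, v) ≤ Φ(d₁) ≤ exp(-d₁²/2)` when `d₁ ≤ 0`, and, integrating the vega `φ(d₁(u))` over
`[a√t, b√t]`, `CBS(k, b√t) ≥ (b - a)√t φ(k / (a√t) + b√t / 2)`, whose prefactor costs only
`γ_t log t / 2 → 0`.
Since `CBS` is increasing in the volatility and `γ_t log c(t) → -Λ_x`, eventually `a < σ̂(t)` when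
`(x / a)² / 2 > Λ_x`, and `σ̂(t) < b` when `(x / a)² / 2 < Λ_x` for some `a < b`.
-/

noncomputable def stdNormalPDF (y : ℝ) : ℝ := exp (-(y ^ 2) / 2) / √(2 * π)

lemma stdNormalCDF_def (w : ℝ) : stdNormalCDF w = ∫ y in Iic w, stdNormalPDF y := rfl

lemma stdNormalPDF_eq_gaussianPDFReal : stdNormalPDF = ProbabilityTheory.gaussianPDFReal 0 1 := by
  ext y
  simp [stdNormalPDF, ProbabilityTheory.gaussianPDFReal, div_eq_inv_mul]

lemma stdNormalPDF_pos (y : ℝ) : 0 < stdNormalPDF y := by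
  unfold stdNormalPDF; positivity

lemma continuous_stdNormalPDF : Continuous stdNormalPDF := by
  unfold stdNormalPDF; fun_prop

lemma integrable_stdNormalPDF : Integrable stdNormalPDF := by
  rw [stdNormalPDF_eq_gaussianPDFReal]
  exact ProbabilityTheory.integrable_gaussianPDFReal 0 1

lemma integral_stdNormalPDF : ∫ y, stdNormalPDF y = 1 := by
  rw [stdNormalPDF_eq_gaussianPDFReal]
  exact ProbabilityTheory.integral_gaussianPDFReal_eq_one 0 one_ne_zero

lemma stdNormalPDF_add (y v : ℝ) :
    stdNormalPDF (y + v) = exp (-(y * v) - v ^ 2 / 2) * stdNormalPDF y := by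
  unfold stdNormalPDF
  rw [← mul_div_assoc, ← exp_add]
  ring_nf

lemma stdNormalPDF_le_of_sq_le {y z : ℝ} (h : y ^ 2 ≤ z ^ 2) : stdNormalPDF z ≤ stdNormalPDF y := by
  unfold stdNormalPDF; gcongr

lemma log_stdNormalPDF (y : ℝ) : log (stdNormalPDF y) = -(y ^ 2) / 2 - log √(2 * π) := by
  rw [stdNormalPDF, log_div (exp_ne_zero _) (by positivity), log_exp]

lemma setIntegral_Iic_comp_add_right (f : ℝ → ℝ) (b c : ℝ) :
    ∫ y in Iic (b - c), f (y + c) = ∫ y in Iic b, f y := by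
  rw [← preimage_add_const_Iic]
  exact (measurePreserving_add_right volume c).setIntegral_preimage_emb
    (measurableEmbedding_addRight c) f _

lemma stdNormalCDF_nonneg (w : ℝ) : 0 ≤ stdNormalCDF w :=
  setIntegral_nonneg measurableSet_Iic fun y _ ↦ (stdNormalPDF_pos y).le

lemma stdNormalCDF_le_one (w : ℝ) : stdNormalCDF w ≤ 1 := by
  rw [stdNormalCDF_def, ← integral_stdNormalPDF]
  exact setIntegral_le_integral integrable_stdNormalPDF
    (Eventually.of_forall fun y ↦ (stdNormalPDF_pos y).le)

lemma stdNormalCDF_le_exp {w : ℝ} (hw : w ≤ 0) : stdNormalCDF w ≤ exp (-(w ^ 2) / 2) := by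
  rw [stdNormalCDF_def, ← setIntegral_Iic_comp_add_right _ w w, sub_self]
  calc ∫ y in Iic 0, stdNormalPDF (y + w)
      ≤ ∫ y in Iic 0, exp (-(w ^ 2) / 2) * stdNormalPDF y := by
        refine setIntegral_mono_on (integrable_stdNormalPDF.comp_add_right w).integrableOn
          (integrable_stdNormalPDF.const_mul _).integrableOn measurableSet_Iic fun y hy ↦ ?_
        rw [stdNormalPDF_add]
        refine mul_le_mul_of_nonneg_right (exp_le_exp.2 ?_) (stdNormalPDF_pos y).le
        nlinarith [mul_nonneg_of_nonpos_of_nonpos (mem_Iic.1 hy) hw]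
    _ = exp (-(w ^ 2) / 2) * stdNormalCDF 0 := integral_const_mul _ _
    _ ≤ exp (-(w ^ 2) / 2) :=
        mul_le_of_le_one_right (exp_pos _).le (stdNormalCDF_le_one 0)

lemma hasDerivAt_stdNormalCDF (w : ℝ) : HasDerivAt stdNormalCDF (stdNormalPDF w) w := by
  have hsplit : (fun u ↦ stdNormalCDF 0 + ∫ y in (0 : ℝ)..u, stdNormalPDF y) = stdNormalCDF := by
    ext u
    rw [stdNormalCDF_def, stdNormalCDF_def, ← intervalIntegral.integral_Iic_sub_Iic
      integrable_stdNormalPDF.integrableOn integrable_stdNormalPDF.integrableOn]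
    ring
  rw [← hsplit]
  exact (intervalIntegral.integral_hasDerivAt_right integrable_stdNormalPDF.intervalIntegrable
    (continuous_stdNormalPDF.stronglyMeasurableAtFilter _ _)
    continuous_stdNormalPDF.continuousAt).const_add _

lemma exp_mul_stdNormalPDF_d₂ (k : ℝ) {v : ℝ} (hv : v ≠ 0) :
    exp k * stdNormalPDF (-(k / v) - v / 2) = stdNormalPDF (-(k / v) + v / 2) := by
  rw [show -(k / v) + v / 2 = (-(k / v) - v / 2) + v by ring, stdNormalPDF_add]
  congr 2
  field_simp
  ring

lemma CBS_nonneg (k : ℝ) {v : ℝ} (hv : 0 < v) : 0 ≤ CBS k v := by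
  set d₂ := -(k / v) - v / 2
  have hd₁ : -(k / v) + v / 2 = d₂ + v := by ring
  rw [CBS, hd₁, sub_nonneg, stdNormalCDF_def, stdNormalCDF_def,
    ← setIntegral_Iic_comp_add_right _ (d₂ + v) v, add_sub_cancel_right, ← integral_const_mul]
  refine setIntegral_mono_on (integrable_stdNormalPDF.const_mul _).integrableOn
    (integrable_stdNormalPDF.comp_add_right v).integrableOn measurableSet_Iic fun y hy ↦ ?_
  rw [stdNormalPDF_add]
  refine mul_le_mul_of_nonneg_right (exp_le_exp.2 ?_) (stdNormalPDF_pos y).le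
  have hyv : y * v ≤ d₂ * v := mul_le_mul_of_nonneg_right (mem_Iic.1 hy) hv.le
  have hd₂v : d₂ * v = -k - v ^ 2 / 2 := by simp only [d₂]; field_simp
  linarith

lemma hasDerivAt_CBS (k : ℝ) {v : ℝ} (hv : 0 < v) :
    HasDerivAt (CBS k) (stdNormalPDF (-(k / v) + v / 2)) v := by
  have hk : HasDerivAt (fun u ↦ -(k / u)) (k / v ^ 2) v :=
    ((hasDerivAt_const v k).div (hasDerivAt_id v) hv.ne').neg.congr_deriv (by simp only [id]; ring)
  have hd₁ := (hasDerivAt_stdNormalCDF _).comp v (hk.add ((hasDerivAt_id v).div_const 2))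
  have hd₂ := ((hasDerivAt_stdNormalCDF _).comp v
    (hk.sub ((hasDerivAt_id v).div_const 2))).const_mul (exp k)
  refine (hd₁.sub hd₂).congr_deriv ?_
  simp only [Pi.add_apply, Pi.sub_apply, id]
  rw [← mul_assoc, exp_mul_stdNormalPDF_d₂ k hv.ne']
  ring

lemma intervalIntegrable_vega (k : ℝ) {w v : ℝ} (hw : 0 < w) (hwv : w ≤ v) :
    IntervalIntegrable (fun u ↦ stdNormalPDF (-(k / u) + u / 2)) volume w v := by
  have hpos : ∀ u ∈ uIcc w v, u ≠ 0 := fun _ hu ↦ (hw.trans_le (uIcc_of_le hwv ▸ hu).1).ne'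
  refine (continuous_stdNormalPDF.comp_continuousOn ?_).intervalIntegrable
  exact ((continuousOn_const.div continuousOn_id hpos).neg).add (continuousOn_id.div_const 2)

lemma CBS_sub_CBS (k : ℝ) {w v : ℝ} (hw : 0 < w) (hwv : w ≤ v) :
    CBS k v - CBS k w = ∫ u in w..v, stdNormalPDF (-(k / u) + u / 2) :=
  (intervalIntegral.integral_eq_sub_of_hasDerivAt (fun _ hu ↦ hasDerivAt_CBS k
    (hw.trans_le (uIcc_of_le hwv ▸ hu).1)) (intervalIntegrable_vega k hw hwv)).symm

lemma CBS_le_CBS (k : ℝ) {w v : ℝ} (hw : 0 < w) (hwv : w ≤ v) : CBS k w ≤ CBS k v := by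
  have hvega : 0 ≤ ∫ u in w..v, stdNormalPDF (-(k / u) + u / 2) :=
    intervalIntegral.integral_nonneg hwv fun _ _ ↦ (stdNormalPDF_pos _).le
  linarith [CBS_sub_CBS k hw hwv]

lemma CBS_le_exp {k v : ℝ} (hd₁ : -(k / v) + v / 2 ≤ 0) :
    CBS k v ≤ exp (-(-(k / v) + v / 2) ^ 2 / 2) := by
  have := mul_nonneg (exp_pos k).le (stdNormalCDF_nonneg (-(k / v) - v / 2))
  unfold CBS
  linarith [stdNormalCDF_le_exp hd₁]

-- On `[w, v]` the vega `φ(d₁(u))` is at least `φ(k / w + v / 2)`, and `CBS k w ≥ 0`.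
lemma sub_mul_stdNormalPDF_le_CBS {k w v : ℝ} (hk : 0 ≤ k) (hw : 0 < w) (hwv : w ≤ v) :
    (v - w) * stdNormalPDF (k / w + v / 2) ≤ CBS k v := by
  have hvega : (v - w) * stdNormalPDF (k / w + v / 2) ≤
      ∫ u in w..v, stdNormalPDF (-(k / u) + u / 2) := by
    rw [← smul_eq_mul, ← intervalIntegral.integral_const]
    refine intervalIntegral.integral_mono_on hwv intervalIntegrable_const
      (intervalIntegrable_vega k hw hwv) fun u ⟨hwu, huv⟩ ↦ ?_
    have hu : 0 < u := hw.trans_le hwu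
    have h₁ : k / u ≤ k / w := div_le_div_of_nonneg_left hk hw hwu
    have h₂ : 0 ≤ k / u := div_nonneg hk hu.le
    exact stdNormalPDF_le_of_sq_le (sq_le_sq' (by linarith) (by linarith))
  linarith [CBS_sub_CBS k hw hwv, CBS_nonneg k hw]

lemma lt_div_sqrt_iff {x Λ a : ℝ} (hx : 0 < x) (hΛ : 0 < Λ) (ha : 0 < a) :
    a < x / √(2 * Λ) ↔ Λ < (x / a) ^ 2 / 2 := by
  rw [lt_div_iff₀ (by positivity), ← lt_div_iff₀' ha, sqrt_lt' (div_pos hx ha)]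
  constructor <;> intro h <;> linarith

lemma div_sqrt_lt_iff {x Λ a : ℝ} (hx : 0 < x) (hΛ : 0 < Λ) (ha : 0 < a) :
    x / √(2 * Λ) < a ↔ (x / a) ^ 2 / 2 < Λ := by
  rw [div_lt_iff₀ (by positivity), ← div_lt_iff₀' ha, lt_sqrt (div_pos hx ha).le]
  constructor <;> intro h <;> linarith

lemma scaled_d_sq_eq {x a b ν t : ℝ} (hν : ν ≠ 0) (ht : 0 < t) (ha : a ≠ 0) :
    ν ^ 2 * t * (x / ν / (a * √t) + b * √t / 2) ^ 2 = (x / a + b * (ν * t) / 2) ^ 2 := by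
  have hs : √t ^ 2 = t := sq_sqrt ht.le
  have hs₀ : √t ≠ 0 := (sqrt_pos.2 ht).ne'
  rw [show ν ^ 2 * t = (ν * √t) ^ 2 by rw [mul_pow, hs], ← mul_pow]
  congr 1
  field_simp
  rw [hs]
  ring

section ImpliedVolatility

variable {l : Filter ℝ} {ν γ c σ : ℝ → ℝ} {x Λ : ℝ}

lemma eventually_lt_impliedVol (hx : 0 < x)
    (hl : ∀ᶠ t in l, 0 < t ∧ 0 < ν t ∧ γ t = ν t ^ 2 * t)
    (hνt : Tendsto (fun t ↦ ν t * t) l (𝓝 0))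
    (hclim : Tendsto (fun t ↦ γ t * log (c t)) l (𝓝 (-Λ)))
    (hBS : ∀ᶠ t in l, 0 < c t ∧ 0 < σ t ∧ CBS (x / ν t) (σ t * √t) = c t)
    {a : ℝ} (ha : 0 < a) (hΛa : Λ < (x / a) ^ 2 / 2) :
    ∀ᶠ t in l, a < σ t := by
  have hlim : Tendsto (fun t ↦ -(-x / a + a * (ν t * t) / 2) ^ 2 / 2) l
      (𝓝 (-((x / a) ^ 2 / 2))) := by
    have hg : Continuous fun u : ℝ ↦ -(-x / a + a * u / 2) ^ 2 / 2 := by fun_prop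
    have h := (hg.tendsto 0).comp hνt
    rwa [show -(-x / a + a * 0 / 2) ^ 2 / 2 = -((x / a) ^ 2 / 2) by ring] at h
  filter_upwards [hlim.eventually_lt hclim (by linarith),
    hνt.eventually (gt_mem_nhds (show 0 < 2 * x / a ^ 2 by positivity)), hl, hBS]
    with t hlt hsmall ⟨ht, hν, hγ⟩ ⟨hc, hσ, hcall⟩
  by_contra! hσa
  have hs : √t ^ 2 = t := sq_sqrt ht.le
  have hd₁ : -(x / ν t / (a * √t)) + a * √t / 2 ≤ 0 := by
    rw [neg_add_nonpos_iff, div_div, le_div_iff₀ (by positivity)]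
    rw [lt_div_iff₀ (by positivity)] at hsmall
    linear_combination (a ^ 2 * ν t / 2) * hs + hsmall / 2
  have hc_le : c t ≤ exp (-(-(x / ν t / (a * √t)) + a * √t / 2) ^ 2 / 2) :=
    hcall ▸ (CBS_le_CBS _ (by positivity) (by gcongr)).trans (CBS_le_exp hd₁)
  have hlog := mul_le_mul_of_nonneg_left ((log_le_iff_le_exp hc).2 hc_le)
    (mul_nonneg (sq_nonneg (ν t)) ht.le)
  rw [← neg_div, ← neg_div, mul_div_assoc', mul_neg, scaled_d_sq_eq hν.ne' ht ha.ne', ← hγ] at hlog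
  linarith

lemma eventually_impliedVol_lt (hx : 0 ≤ x)
    (hl : ∀ᶠ t in l, 0 < t ∧ 0 < ν t ∧ γ t = ν t ^ 2 * t)
    (hγ : Tendsto γ l (𝓝 0)) (hνt : Tendsto (fun t ↦ ν t * t) l (𝓝 0))
    (hγlog : Tendsto (fun t ↦ γ t * log t) l (𝓝 0))
    (hclim : Tendsto (fun t ↦ γ t * log (c t)) l (𝓝 (-Λ)))
    (hBS : ∀ᶠ t in l, CBS (x / ν t) (σ t * √t) = c t)
    {a b : ℝ} (ha : 0 < a) (hab : a < b) (hΛa : (x / a) ^ 2 / 2 < Λ) :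
    ∀ᶠ t in l, σ t < b := by
  have hlim : Tendsto (fun t ↦ γ t * (log (b - a) - log √(2 * π)) + γ t * log t / 2
      - (x / a + b * (ν t * t) / 2) ^ 2 / 2) l (𝓝 (-((x / a) ^ 2 / 2))) := by
    have hg : Continuous fun u : ℝ ↦ (x / a + b * u / 2) ^ 2 / 2 := by fun_prop
    have h := ((hγ.mul_const (log (b - a) - log √(2 * π))).add (hγlog.div_const 2)).sub
      ((hg.tendsto 0).comp hνt)
    rwa [show 0 * (log (b - a) - log √(2 * π)) + 0 / 2 - (x / a + b * 0 / 2) ^ 2 / 2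
      = -((x / a) ^ 2 / 2) by ring] at h
  have hlog_bound : ∀ᶠ t in l, γ t * log ((b * √t - a * √t) *
      stdNormalPDF (x / ν t / (a * √t) + b * √t / 2)) = γ t * (log (b - a) - log √(2 * π))
      + γ t * log t / 2 - (x / a + b * (ν t * t) / 2) ^ 2 / 2 := by
    filter_upwards [hl] with t ⟨ht, hν, hγ⟩
    rw [← sub_mul, log_mul (by nlinarith [sqrt_pos.2 ht]) (stdNormalPDF_pos _).ne',
      log_mul (by linarith) (sqrt_pos.2 ht).ne', log_sqrt ht.le, log_stdNormalPDF,
      ← scaled_d_sq_eq hν.ne' ht ha.ne', hγ]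
    ring
  filter_upwards [hclim.eventually_lt (hlim.congr' (hlog_bound.mono fun _ h ↦ h.symm))
    (by linarith), hl, hBS] with t hlt ⟨ht, hν, hγ⟩ hcall
  by_contra! hbσ
  have hst : 0 < √t := sqrt_pos.2 ht
  have hbound : (b * √t - a * √t) * stdNormalPDF (x / ν t / (a * √t) + b * √t / 2) ≤ c t :=
    hcall ▸ (sub_mul_stdNormalPDF_le_CBS (div_nonneg hx hν.le) (mul_pos ha hst) (by gcongr)).trans
      (CBS_le_CBS _ (mul_pos (ha.trans hab) hst) (by gcongr))
  have hpos : 0 < (b * √t - a * √t) * stdNormalPDF (x / ν t / (a * √t) + b * √t / 2) :=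
    mul_pos (by nlinarith) (stdNormalPDF_pos _)
  have := mul_le_mul_of_nonneg_left (log_le_log hpos hbound)
    (hγ ▸ mul_nonneg (sq_nonneg (ν t)) ht.le)
  linarith

theorem tendsto_impliedVol_of_tendsto_mul_log_call (hx : 0 < x) (hΛ : 0 < Λ)
    (hl : ∀ᶠ t in l, 0 < t ∧ 0 < ν t ∧ γ t = ν t ^ 2 * t)
    (hγ : Tendsto γ l (𝓝 0)) (hνt : Tendsto (fun t ↦ ν t * t) l (𝓝 0))
    (hγlog : Tendsto (fun t ↦ γ t * log t) l (𝓝 0))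
    (hclim : Tendsto (fun t ↦ γ t * log (c t)) l (𝓝 (-Λ)))
    (hBS : ∀ᶠ t in l, 0 < c t ∧ 0 < σ t ∧ CBS (x / ν t) (σ t * √t) = c t) :
    Tendsto σ l (𝓝 (x / √(2 * Λ))) := by
  rw [tendsto_order]
  refine ⟨fun a ha ↦ ?_, fun b hb ↦ ?_⟩
  · rcases le_or_gt a 0 with ha₀ | ha₀
    · filter_upwards [hBS] with t h using ha₀.trans_lt h.2.1
    · exact eventually_lt_impliedVol hx hl hνt hclim hBS ha₀ ((lt_div_sqrt_iff hx hΛ ha₀).1 ha)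
  · obtain ⟨a, hxa, hab⟩ := exists_between hb
    have ha₀ : 0 < a := (div_pos hx (sqrt_pos.2 (by positivity))).trans hxa
    exact eventually_impliedVol_lt hx.le hl hγ hνt hγlog hclim (hBS.mono fun _ h ↦ h.2.2) ha₀ hab
      ((div_sqrt_lt_iff hx hΛ ha₀).1 hxa)

end ImpliedVolatility

lemma rpow_sub_half_sq_mul {t : ℝ} (ht : 0 < t) (H : ℝ) :
    (t ^ (H - 1 / 2)) ^ 2 * t = t ^ (2 * H) := by
  rw [← rpow_natCast, ← rpow_mul ht.le, ← rpow_add_one ht.ne']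
  norm_num
  ring_nf

theorem stmt_14_general (H : ℝ)
    (L : ℝ → ℝ) (hLpos : ∀ t ∈ Set.Ioc (0:ℝ) 1, 0 < L t)
    (γ ν : ℝ → ℝ)
    (hγdef : ∀ t ∈ Set.Ioc (0:ℝ) 1, γ t = t ^ (2 * H) * (L t) ^ 2)
    (hνdef : ∀ t ∈ Set.Ioc (0:ℝ) 1, ν t = t ^ (H - 1 / 2) * L t)
    (hγ0 : Tendsto γ (nhdsWithin 0 (Set.Ioc 0 1)) (𝓝 0))
    (hγlogt : Tendsto (fun t => γ t * Real.log t) (nhdsWithin 0 (Set.Ioc 0 1)) (𝓝 0))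
    (x Λx : ℝ) (hx : 0 < x) (hΛx : 0 < Λx)
    (t₀ : ℝ) (ht₀ : t₀ ∈ Set.Ioc (0:ℝ) 1)
    (c : ℝ → ℝ) (hc : ∀ t ∈ Set.Ioo (0:ℝ) t₀, c t ∈ Set.Ioo (0:ℝ) 1)
    (hclim : Tendsto (fun t => γ t * Real.log (c t)) (nhdsWithin 0 (Set.Ioo 0 t₀)) (𝓝 (-Λx)))
    (σhat : ℝ → ℝ) (hσpos : ∀ t ∈ Set.Ioo (0:ℝ) t₀, 0 < σhat t)
    (hBS : ∀ t ∈ Set.Ioo (0:ℝ) t₀, CBS (x / ν t) (σhat t * Real.sqrt t) = c t) :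
    Tendsto σhat (nhdsWithin 0 (Set.Ioo 0 t₀)) (𝓝 (x / Real.sqrt (2 * Λx))) := by
  have hmono : 𝓝[Ioo 0 t₀] (0 : ℝ) ≤ 𝓝[Ioc 0 1] 0 :=
    nhdsWithin_mono 0 fun t ht ↦ ⟨ht.1, ht.2.le.trans ht₀.2⟩
  have hl : ∀ᶠ t in 𝓝[Ioo 0 t₀] 0, 0 < t ∧ 0 < ν t ∧ γ t = ν t ^ 2 * t := by
    filter_upwards [hmono self_mem_nhdsWithin] with t ht
    refine ⟨ht.1, hνdef t ht ▸ mul_pos (rpow_pos_of_pos ht.1 _) (hLpos t ht), ?_⟩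
    rw [hγdef t ht, hνdef t ht, mul_pow, mul_right_comm, rpow_sub_half_sq_mul ht.1]
  have hνt : Tendsto (fun t ↦ ν t * t) (𝓝[Ioo 0 t₀] 0) (𝓝 0) := by
    have hsqrt : Tendsto (fun t ↦ √(γ t) * √t) (𝓝[Ioo 0 t₀] 0) (𝓝 0) := by
      simpa using ((continuous_sqrt.tendsto 0).comp (hγ0.mono_left hmono)).mul
        ((continuous_sqrt.tendsto 0).mono_left nhdsWithin_le_nhds)
    refine hsqrt.congr' ?_
    filter_upwards [hl] with t ⟨ht, hν, hγ⟩
    rw [hγ, sqrt_mul (sq_nonneg _), sqrt_sq hν.le, mul_assoc, mul_self_sqrt ht.le]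
  exact tendsto_impliedVol_of_tendsto_mul_log_call hx hΛx hl (hγ0.mono_left hmono) hνt
    (hγlogt.mono_left hmono) hclim
    (by filter_upwards [self_mem_nhdsWithin] with t ht using ⟨(hc t ht).1, hσpos t ht, hBS t ht⟩)

/-- Transfer of large-deviations call-price asymptotics to implied volatility in
the log-modulated regime: if `γ_t log c(t) → -Λ_x` and `σ̂(t)` is the implied
volatility of `c(t)` at log-moneyness `x/ν_t`, then `σ̂(t) → x/√(2Λ_x)`. -/
theorem stmt_14 (H : ℝ) (hH : H ∈ Set.Ioo 0 (1 / 2))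
    (L : ℝ → ℝ) (hLpos : ∀ t ∈ Set.Ioc (0:ℝ) 1, 0 < L t)
    (γ ν : ℝ → ℝ)
    (hγdef : ∀ t ∈ Set.Ioc (0:ℝ) 1, γ t = t ^ (2 * H) * (L t) ^ 2)
    (hνdef : ∀ t ∈ Set.Ioc (0:ℝ) 1, ν t = t ^ (H - 1 / 2) * L t)
    (hγ0 : Tendsto γ (nhdsWithin 0 (Set.Ioc 0 1)) (𝓝 0))
    (hνinf : Tendsto ν (nhdsWithin 0 (Set.Ioc 0 1)) atTop)
    (hγlogν : Tendsto (fun t => γ t * Real.log (ν t)) (nhdsWithin 0 (Set.Ioc 0 1)) (𝓝 0))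
    (hγlogt : Tendsto (fun t => γ t * Real.log t) (nhdsWithin 0 (Set.Ioc 0 1)) (𝓝 0))
    (x Λx : ℝ) (hx : 0 < x) (hΛx : 0 < Λx)
    (t₀ : ℝ) (ht₀ : t₀ ∈ Set.Ioc (0:ℝ) 1)
    (c : ℝ → ℝ) (hc : ∀ t ∈ Set.Ioo (0:ℝ) t₀, c t ∈ Set.Ioo (0:ℝ) 1)
    (hclim : Tendsto (fun t => γ t * Real.log (c t)) (nhdsWithin 0 (Set.Ioo 0 t₀)) (𝓝 (-Λx)))
    (σhat : ℝ → ℝ) (hσpos : ∀ t ∈ Set.Ioo (0:ℝ) t₀, 0 < σhat t)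
    (hBS : ∀ t ∈ Set.Ioo (0:ℝ) t₀, CBS (x / ν t) (σhat t * Real.sqrt t) = c t) :
    Tendsto σhat (nhdsWithin 0 (Set.Ioo 0 t₀)) (𝓝 (x / Real.sqrt (2 * Λx))) :=
  stmt_14_general H L hLpos γ ν hγdef hνdef hγ0 hγlogt x Λx hx hΛx t₀ ht₀ c hc hclim σhat hσpos hBS
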